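/- (Subspace form of the Courant–Fischer analogue.) Let A be an admissible pseudo-Hermitian n×n matrix with eigenvalues λ_p ≥ … ≥ λ_1 > μ_1 ≥ … ≥ μ_q, and let 1 ≤ k ≤ p. Then: (i) for every k-dimensional complex subspace W ⊆ ℂⁿ with W ∖ {0} ⊆ ℂⁿ₊, there exists a nonzero x ∈ W with R_A(x) ≥ λ_k; and (ii) there exists a k-dimensional complex subspace W ⊆ ℂⁿ with W ∖ {0} ⊆ ℂⁿ₊ such that R_A(x) ≤ λ_k for every nonzero x ∈ W, with equality attained. Consequently λ_k = min over k-dimensional subspaces W lying (apart from the origin) in ℂⁿ₊ of max_{x ∈ W∖{0}} R_A(x). -/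

import Mathlib

open Matrix

/-- The signature matrix `J = diag(1,…,1,−1,…,−1)` with `p` ones and `q` minus-ones. -/
noncomputable def Jmat (p q : ℕ) : Matrix (Fin (p + q)) (Fin (p + q)) ℂ :=
  Matrix.diagonal (fun i => if (i : ℕ) < p then 1 else -1)

/-- The indefinite pairing `⟨z,w⟩ = Σ_{i<p} z_i conj(w_i) − Σ_{i≥p} z_i conj(w_i)`;
equivalently `w† · z` where `x† = (J conj(x))ᵀ`. -/
noncomputable def pairing (p q : ℕ) (z w : Fin (p + q) → ℂ) : ℂ :=
  ∑ i : Fin (p + q),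
    (if (i : ℕ) < p then z i * (starRingEnd ℂ) (w i) else -(z i * (starRingEnd ℂ) (w i)))

/-- The diagonal entries of `Λ = diag(λ_p, …, λ_1, μ_1, …, μ_q)`, where `lam` and `mu`
are 0-indexed: `lam i = λ_{i+1}` and `mu j = μ_{j+1}`. -/
noncomputable def diagEntries (p q : ℕ) (lam : Fin p → ℝ) (mu : Fin q → ℝ) :
    Fin (p + q) → ℂ :=
  fun i =>
    if h : (i : ℕ) < p then ((lam ⟨p - 1 - (i : ℕ), by omega⟩ : ℝ) : ℂ)
    else ((mu ⟨(i : ℕ) - p, by have := i.isLt; omega⟩ : ℝ) : ℂ)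

/-- `A` is an admissible pseudo-Hermitian matrix with (real) eigenvalues
`λ_p ≥ … ≥ λ_1 > μ_1 ≥ … ≥ μ_q`, recorded 0-indexed as `lam i = λ_{i+1}` (so `lam` is
monotone) and `mu j = μ_{j+1}` (so `mu` is antitone), with `λ_1 > μ_1`, and
`A = U Λ U⁻¹` for some invertible `U` with `U J Uᴴ = J`. -/
def IsAdmissible (p q : ℕ) (hp : 0 < p) (hq : 0 < q)
    (A : Matrix (Fin (p + q)) (Fin (p + q)) ℂ)
    (lam : Fin p → ℝ) (mu : Fin q → ℝ) : Prop :=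
  A * Jmat p q = Jmat p q * A.conjTranspose ∧
  Monotone lam ∧ Antitone mu ∧ mu ⟨0, hq⟩ < lam ⟨0, hp⟩ ∧
  ∃ U : Matrix (Fin (p + q)) (Fin (p + q)) ℂ,
    IsUnit U ∧ U * Jmat p q * U.conjTranspose = Jmat p q ∧
    A = U * Matrix.diagonal (diagEntries p q lam mu) * U⁻¹

/-- The Rayleigh ratio `R_A(x) = (x† A x)/(x† x)`, as a real number (for admissible
pseudo-Hermitian `A` both `x† A x` and `x† x` are real). -/
noncomputable def rayleigh (p q : ℕ) (A : Matrix (Fin (p + q)) (Fin (p + q)) ℂ)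
    (x : Fin (p + q) → ℂ) : ℝ :=
  (pairing p q (A.mulVec x) x).re / (pairing p q x x).re

/-! Conjugating by a `J`-unitary `U` preserves the pairing, so `R_A(U y) = R_Λ(y)` and `U` carries
`k`-dimensional positive subspaces to each other; it thus suffices to treat `Λ` diagonal. There
`R_Λ(y) - c = Σ ±(Λᵢ - c)|yᵢ|² / ⟨y, y⟩`. A positive `k`-dimensional subspace meets the
subspace cut out by the `k - 1` coordinates carrying `λ_{k-1}, …, λ_1` nontrivially, and on that
subspace every term is `≥ 0` for `c = λ_k` (the `μ`'s lie below `λ_1 ≤ λ_k`). The span of the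
coordinate vectors carrying `λ_k, …, λ_1` is positive, and every term is `≤ 0` on it. -/

section CoordinateSubspaces

variable {K ι κ : Type*} [Field K]

theorem Submodule.exists_mem_ne_zero_forall_apply_eq_zero [Fintype ι] [Fintype κ]
    (V : Submodule K (ι → K)) (f : κ → ι) (h : Fintype.card κ < Module.finrank K V) : ∃ x ∈ V, x ≠ 0 ∧ ∀ j, x (f j) = 0 := by
  have hker : ((LinearMap.funLeft K K f).domRestrict V).ker ≠ ⊥ :=
    LinearMap.ker_ne_bot_of_finrank_lt (by simpa using h)
  obtain ⟨⟨x, hxV⟩, hx, hx0⟩ := Submodule.exists_mem_ne_zero_of_ne_bot hker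
  exact ⟨x, hxV, fun h => hx0 (Subtype.ext h), fun j => congrFun hx j⟩

variable [DecidableEq ι]

theorem finrank_span_range_single [Fintype κ] {f : κ → ι} (hf : Function.Injective f) :
    Module.finrank K (Submodule.span K (Set.range fun j => (Pi.single (f j) 1 : ι → K))) =
      Fintype.card κ :=
  finrank_span_eq_card ((Pi.linearIndependent_single_one ι K).comp f hf)

theorem apply_eq_zero_of_mem_span_range_single {f : κ → ι} {x : ι → K}
    (hx : x ∈ Submodule.span K (Set.range fun j => (Pi.single (f j) 1 : ι → K))) {i : ι}
    (hi : i ∉ Set.range f) : x i = 0 := by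
  have hle : Submodule.span K (Set.range fun j => (Pi.single (f j) 1 : ι → K)) ≤
      (LinearMap.proj i : (ι → K) →ₗ[K] K).ker := by
    rw [Submodule.span_le]
    rintro _ ⟨j, rfl⟩
    exact Pi.single_eq_of_ne (fun h => hi ⟨j, h.symm⟩) 1
  exact hle hx

end CoordinateSubspaces

theorem Matrix.mul_mul_eq_of_mul_mul_eq {n R : Type*} [Fintype n] [DecidableEq n] [CommRing R]
    {J U V : Matrix n n R} (hJ : J * J = 1) (h : U * J * V = J) : V * J * U = J := by
  have hU : U * (J * V * J) = 1 := by simp only [← Matrix.mul_assoc, h, hJ]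
  calc V * J * U = J * (J * V * J * U) := by simp only [← Matrix.mul_assoc, hJ, Matrix.one_mul]
    _ = J := by rw [mul_eq_one_comm.mp hU, Matrix.mul_one]

section Pairing

variable {p q : ℕ}

def signature (p q : ℕ) (i : Fin (p + q)) : ℝ := if (i : ℕ) < p then 1 else -1

theorem signature_of_lt {i : Fin (p + q)} (h : (i : ℕ) < p) : signature p q i = 1 := if_pos h

theorem signature_of_not_lt {i : Fin (p + q)} (h : ¬(i : ℕ) < p) : signature p q i = -1 :=
  if_neg h

theorem Jmat_mul_Jmat : Jmat p q * Jmat p q = 1 := by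
  rw [Jmat, diagonal_mul_diagonal, ← diagonal_one]
  congr 1
  funext i
  split_ifs <;> norm_num

theorem pairing_eq_dotProduct (z w : Fin (p + q) → ℂ) :
    pairing p q z w = star w ⬝ᵥ (Jmat p q *ᵥ z) := by
  unfold pairing Jmat dotProduct
  refine Finset.sum_congr rfl fun i _ => ?_
  simp only [mulVec_diagonal, Pi.star_apply, Complex.star_def]
  split <;> ring

theorem pairing_mulVec_mulVec {U : Matrix (Fin (p + q)) (Fin (p + q)) ℂ}
    (hU : Uᴴ * Jmat p q * U = Jmat p q) (z w : Fin (p + q) → ℂ) :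
    pairing p q (U *ᵥ z) (U *ᵥ w) = pairing p q z w := by
  rw [pairing_eq_dotProduct, pairing_eq_dotProduct, star_mulVec, ← dotProduct_mulVec,
    mulVec_mulVec, mulVec_mulVec, hU]

theorem rayleigh_mul_mul_inv_mulVec {U : Matrix (Fin (p + q)) (Fin (p + q)) ℂ} (hU : IsUnit U)
    (hJ : Uᴴ * Jmat p q * U = Jmat p q) (D : Matrix (Fin (p + q)) (Fin (p + q)) ℂ)
    (y : Fin (p + q) → ℂ) : rayleigh p q (U * D * U⁻¹) (U *ᵥ y) = rayleigh p q D y := by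
  have hconj : (U * D * U⁻¹) *ᵥ (U *ᵥ y) = U *ᵥ (D *ᵥ y) := by
    rw [mulVec_mulVec, Matrix.mul_assoc, nonsing_inv_mul _ ((isUnit_iff_isUnit_det U).mp hU),
      Matrix.mul_one, mulVec_mulVec]
  rw [rayleigh, rayleigh, hconj, pairing_mulVec_mulVec hJ, pairing_mulVec_mulVec hJ]

theorem re_pairing_diagonal_mulVec (d y : Fin (p + q) → ℂ) :
    (pairing p q (diagonal d *ᵥ y) y).re =
      ∑ i, signature p q i * (d i).re * Complex.normSq (y i) := by
  rw [pairing, Complex.re_sum]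
  refine Finset.sum_congr rfl fun i _ => ?_
  have h : (d i * y i * (starRingEnd ℂ) (y i)).re = (d i).re * Complex.normSq (y i) := by
    rw [mul_assoc, Complex.mul_conj, Complex.re_mul_ofReal]
  rw [mulVec_diagonal, signature]
  split <;> simp [h]

theorem re_pairing_self (y : Fin (p + q) → ℂ) :
    (pairing p q y y).re = ∑ i, signature p q i * Complex.normSq (y i) := by
  simpa using re_pairing_diagonal_mulVec (fun _ => 1) y

theorem re_pairing_diagonal_mulVec_sub_mul (d y : Fin (p + q) → ℂ) (c : ℝ) :
    (pairing p q (diagonal d *ᵥ y) y).re - c * (pairing p q y y).re =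
      ∑ i, signature p q i * ((d i).re - c) * Complex.normSq (y i) := by
  rw [re_pairing_diagonal_mulVec, re_pairing_self, Finset.mul_sum, ← Finset.sum_sub_distrib]
  exact Finset.sum_congr rfl fun i _ => by ring

theorem le_rayleigh_diagonal {d y : Fin (p + q) → ℂ} {c : ℝ} (hy : 0 < (pairing p q y y).re)
    (h : ∀ i, y i ≠ 0 → 0 ≤ signature p q i * ((d i).re - c)) :
    c ≤ rayleigh p q (diagonal d) y := by
  rw [rayleigh, le_div_iff₀ hy, ← sub_nonneg, re_pairing_diagonal_mulVec_sub_mul]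
  refine Finset.sum_nonneg fun i _ => ?_
  by_cases hi : y i = 0
  · simp [hi]
  · exact mul_nonneg (h i hi) (Complex.normSq_nonneg _)

theorem rayleigh_diagonal_le {d y : Fin (p + q) → ℂ} {c : ℝ} (hy : 0 < (pairing p q y y).re)
    (h : ∀ i, y i ≠ 0 → signature p q i * ((d i).re - c) ≤ 0) :
    rayleigh p q (diagonal d) y ≤ c := by
  rw [rayleigh, div_le_iff₀ hy, ← sub_nonpos, re_pairing_diagonal_mulVec_sub_mul]
  refine Finset.sum_nonpos fun i _ => ?_
  by_cases hi : y i = 0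
  · simp [hi]
  · exact mul_nonpos_of_nonpos_of_nonneg (h i hi) (Complex.normSq_nonneg _)

theorem rayleigh_diagonal_single (d : Fin (p + q) → ℂ) (i : Fin (p + q)) :
    rayleigh p q (diagonal d) (Pi.single i 1) = (d i).re := by
  have hs : signature p q i ≠ 0 := by unfold signature; split <;> norm_num
  rw [rayleigh, re_pairing_diagonal_mulVec, re_pairing_self]
  simp [Pi.single_apply, hs]

theorem re_pairing_self_pos {y : Fin (p + q) → ℂ} (hy : y ≠ 0) (h : ∀ i, y i ≠ 0 → (i : ℕ) < p) :
    0 < (pairing p q y y).re := by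
  obtain ⟨i, hi⟩ := Function.ne_iff.mp hy
  have hterm : ∀ j, 0 ≤ signature p q j * Complex.normSq (y j) := fun j => by
    by_cases hj : y j = 0
    · simp [hj]
    · rw [signature_of_lt (h j hj), one_mul]
      exact Complex.normSq_nonneg _
  rw [re_pairing_self]
  refine Finset.sum_pos' (fun j _ => hterm j) ⟨i, Finset.mem_univ _, ?_⟩
  rw [signature_of_lt (h i hi), one_mul]
  exact Complex.normSq_pos.mpr hi

end Pairing

section MinMax

variable {p q : ℕ}

def IsPositiveSubspace (p q : ℕ) (W : Submodule ℂ (Fin (p + q) → ℂ)) : Prop :=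
  ∀ x ∈ W, x ≠ 0 → 0 < (pairing p q x x).re

/-- `c` is the min over positive `k`-dimensional subspaces of the max of the Rayleigh ratio. -/
def IsMinMaxRayleigh (p q : ℕ) (A : Matrix (Fin (p + q)) (Fin (p + q)) ℂ) (k : ℕ) (c : ℝ) :
    Prop :=
  (∀ W : Submodule ℂ (Fin (p + q) → ℂ), Module.finrank ℂ W = k → IsPositiveSubspace p q W →
      ∃ x ∈ W, x ≠ 0 ∧ c ≤ rayleigh p q A x) ∧
    ∃ W : Submodule ℂ (Fin (p + q) → ℂ), Module.finrank ℂ W = k ∧ IsPositiveSubspace p q W ∧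
      (∀ x ∈ W, x ≠ 0 → rayleigh p q A x ≤ c) ∧ ∃ x ∈ W, x ≠ 0 ∧ rayleigh p q A x = c

theorem IsPositiveSubspace.map {W : Submodule ℂ (Fin (p + q) → ℂ)} (hW : IsPositiveSubspace p q W)
    (e : (Fin (p + q) → ℂ) ≃ₗ[ℂ] (Fin (p + q) → ℂ))
    (he : ∀ x, pairing p q (e x) (e x) = pairing p q x x) :
    IsPositiveSubspace p q (W.map (e : (Fin (p + q) → ℂ) →ₗ[ℂ] (Fin (p + q) → ℂ))) := by
  intro x hx hx0
  rw [← e.apply_symm_apply x, he]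
  exact hW _ ((Submodule.mem_map_equiv _).mp hx) (by simpa using hx0)

theorem IsMinMaxRayleigh.of_linearEquiv {A B : Matrix (Fin (p + q)) (Fin (p + q)) ℂ} {k : ℕ}
    {c : ℝ} (h : IsMinMaxRayleigh p q B k c) (e : (Fin (p + q) → ℂ) ≃ₗ[ℂ] (Fin (p + q) → ℂ))
    (he : ∀ x, pairing p q (e x) (e x) = pairing p q x x)
    (hR : ∀ x, rayleigh p q A (e x) = rayleigh p q B x) : IsMinMaxRayleigh p q A k c := by
  have he_symm : ∀ x, pairing p q (e.symm x) (e.symm x) = pairing p q x x := fun x => by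
    rw [← he, e.apply_symm_apply]
  obtain ⟨hmin, W₀, hW₀, hpos₀, hle₀, x₀, hx₀, hx₀0, heq₀⟩ := h
  refine ⟨fun W hW hpos => ?_, W₀.map (e : (Fin (p + q) → ℂ) →ₗ[ℂ] (Fin (p + q) → ℂ)), ?_,
    IsPositiveSubspace.map hpos₀ e he, ?_, ?_⟩
  · obtain ⟨x, hx, hx0, hcx⟩ := hmin (W.map (e.symm : (Fin (p + q) → ℂ) →ₗ[ℂ] (Fin (p + q) → ℂ)))
      (by rwa [LinearEquiv.finrank_map_eq]) (IsPositiveSubspace.map hpos e.symm he_symm)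
    refine ⟨e x, by simpa using (Submodule.mem_map_equiv _).mp hx, by simpa using hx0, ?_⟩
    rwa [hR]
  · rwa [LinearEquiv.finrank_map_eq]
  · intro x hx hx0
    rw [← e.apply_symm_apply x, hR]
    exact hle₀ _ ((Submodule.mem_map_equiv _).mp hx) (by simpa using hx0)
  · exact ⟨e x₀, Submodule.mem_map_of_mem hx₀, by simpa using hx₀0, by rw [hR, heq₀]⟩

end MinMax

section Diagonal

variable {p q : ℕ} {lam : Fin p → ℝ} {mu : Fin q → ℝ}

theorem diagEntries_re_of_lt {i : Fin (p + q)} (h : (i : ℕ) < p) :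
    (diagEntries p q lam mu i).re = lam ⟨p - 1 - i, by omega⟩ := by
  simp [diagEntries, h]

theorem diagEntries_re_of_not_lt {i : Fin (p + q)} (h : ¬(i : ℕ) < p) :
    (diagEntries p q lam mu i).re = mu ⟨i - p, by have := i.isLt; omega⟩ := by
  simp [diagEntries, h]

theorem exists_le_rayleigh_diagonal_diagEntries (hp : 0 < p) (hq : 0 < q) (hmono : Monotone lam)
    (hanti : Antitone mu) (hgap : mu ⟨0, hq⟩ < lam ⟨0, hp⟩) {k : ℕ} (hk1 : 1 ≤ k)
    (hk2 : k ≤ p) (W : Submodule ℂ (Fin (p + q) → ℂ)) (hW : Module.finrank ℂ W = k)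
    (hpos : IsPositiveSubspace p q W) :
    ∃ x ∈ W, x ≠ 0 ∧
      lam ⟨k - 1, Nat.sub_one_lt_of_le hk1 hk2⟩ ≤
        rayleigh p q (diagonal (diagEntries p q lam mu)) x := by
  obtain ⟨y, hyW, hy0, hyz⟩ := W.exists_mem_ne_zero_forall_apply_eq_zero
    (fun j : Fin (k - 1) => (⟨p - k + 1 + j, by have := j.isLt; omega⟩ : Fin (p + q)))
    (by rw [Fintype.card_fin, hW]; omega)
  refine ⟨y, hyW, hy0, le_rayleigh_diagonal (hpos y hyW hy0) fun i hi => ?_⟩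
  by_cases hip : (i : ℕ) < p
  · have hik : (i : ℕ) ≤ p - k := by
      by_contra hik
      exact hi (by convert hyz ⟨i - (p - k + 1), by omega⟩ using 2; ext; simp; omega)
    rw [signature_of_lt hip, diagEntries_re_of_lt hip, one_mul, sub_nonneg]
    exact hmono (Fin.mk_le_mk.mpr (by omega))
  · have hmu : mu ⟨i - p, by omega⟩ ≤ mu ⟨0, hq⟩ := hanti (Fin.mk_le_mk.mpr (Nat.zero_le _))
    have hlam : lam ⟨0, hp⟩ ≤ lam ⟨k - 1, Nat.sub_one_lt_of_le hk1 hk2⟩ :=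
      hmono (Fin.mk_le_mk.mpr (Nat.zero_le _))
    rw [signature_of_not_lt hip, diagEntries_re_of_not_lt hip]
    linarith

theorem exists_rayleigh_diagonal_diagEntries_le (hmono : Monotone lam) {k : ℕ} (hk1 : 1 ≤ k)
    (hk2 : k ≤ p) :
    ∃ W : Submodule ℂ (Fin (p + q) → ℂ), Module.finrank ℂ W = k ∧ IsPositiveSubspace p q W ∧
      (∀ x ∈ W, x ≠ 0 →
        rayleigh p q (diagonal (diagEntries p q lam mu)) x ≤
          lam ⟨k - 1, Nat.sub_one_lt_of_le hk1 hk2⟩) ∧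
      ∃ x ∈ W, x ≠ 0 ∧
        rayleigh p q (diagonal (diagEntries p q lam mu)) x =
          lam ⟨k - 1, Nat.sub_one_lt_of_le hk1 hk2⟩ := by
  set f : Fin k → Fin (p + q) := fun j => ⟨p - k + j, by omega⟩
  have hf : Function.Injective f := fun a b h => Fin.ext (by simpa [f] using h)
  set W := Submodule.span ℂ (Set.range fun j => (Pi.single (f j) 1 : Fin (p + q) → ℂ))
  have hsupp : ∀ y ∈ W, ∀ i, y i ≠ 0 → p - k ≤ (i : ℕ) ∧ (i : ℕ) < p := by
    intro y hy i hi
    by_contra hik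
    refine hi (apply_eq_zero_of_mem_span_range_single hy ?_)
    rintro ⟨j, rfl⟩
    exact hik ⟨by simp [f], by simp [f]; omega⟩
  have hpos : IsPositiveSubspace p q W := fun y hy hy0 =>
    re_pairing_self_pos hy0 fun i hi => (hsupp y hy i hi).2
  refine ⟨W, by rw [finrank_span_range_single hf, Fintype.card_fin], hpos,
    fun y hy hy0 => rayleigh_diagonal_le (hpos y hy hy0) fun i hi => ?_,
    Pi.single (f ⟨0, hk1⟩) 1, Submodule.subset_span ⟨_, rfl⟩, by simp, ?_⟩
  · obtain ⟨hki, hip⟩ := hsupp y hy i hi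
    rw [signature_of_lt hip, diagEntries_re_of_lt hip, one_mul, sub_nonpos]
    exact hmono (Fin.mk_le_mk.mpr (by omega))
  · have hlt : ((f ⟨0, hk1⟩ : Fin (p + q)) : ℕ) < p := by simp [f]; omega
    rw [rayleigh_diagonal_single, diagEntries_re_of_lt hlt]
    congr 2
    simp [f]
    omega

theorem isMinMaxRayleigh_diagonal_diagEntries (hp : 0 < p) (hq : 0 < q) (hmono : Monotone lam)
    (hanti : Antitone mu) (hgap : mu ⟨0, hq⟩ < lam ⟨0, hp⟩) {k : ℕ} (hk1 : 1 ≤ k) (hk2 : k ≤ p) :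
    IsMinMaxRayleigh p q (diagonal (diagEntries p q lam mu)) k
      (lam ⟨k - 1, Nat.sub_one_lt_of_le hk1 hk2⟩) :=
  ⟨exists_le_rayleigh_diagonal_diagEntries hp hq hmono hanti hgap hk1 hk2,
    exists_rayleigh_diagonal_diagEntries_le hmono hk1 hk2⟩

end Diagonal

/-- subspace form of Courant–Fischer: for `1 ≤ k ≤ p`,
(i) every `k`-dimensional subspace `W` with `W ∖ {0} ⊆ ℂⁿ₊` contains a nonzero `x`
with `R_A(x) ≥ λ_k`; (ii) there is such a `W` on which `R_A ≤ λ_k` with equality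
attained. -/
theorem courant_fischer_subspace_form
    (p q : ℕ) (hp : 0 < p) (hq : 0 < q)
    (A : Matrix (Fin (p + q)) (Fin (p + q)) ℂ)
    (lam : Fin p → ℝ) (mu : Fin q → ℝ)
    (hA : IsAdmissible p q hp hq A lam mu)
    (k : ℕ) (hk1 : 1 ≤ k) (hk2 : k ≤ p) :
    (∀ W : Submodule ℂ (Fin (p + q) → ℂ), Module.finrank ℂ W = k →
        (∀ x ∈ W, x ≠ 0 → 0 < (pairing p q x x).re) →
        ∃ x ∈ W, x ≠ 0 ∧ lam ⟨k - 1, by omega⟩ ≤ rayleigh p q A x) ∧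
    (∃ W : Submodule ℂ (Fin (p + q) → ℂ), Module.finrank ℂ W = k ∧
        (∀ x ∈ W, x ≠ 0 → 0 < (pairing p q x x).re) ∧
        (∀ x ∈ W, x ≠ 0 → rayleigh p q A x ≤ lam ⟨k - 1, by omega⟩) ∧
        (∃ x ∈ W, x ≠ 0 ∧ rayleigh p q A x = lam ⟨k - 1, by omega⟩)) := by
  obtain ⟨-, hmono, hanti, hgap, U, hU, hUJ, rfl⟩ := hA
  have hJ : Uᴴ * Jmat p q * U = Jmat p q := mul_mul_eq_of_mul_mul_eq Jmat_mul_Jmat hUJ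
  exact (isMinMaxRayleigh_diagonal_diagEntries hp hq hmono hanti hgap hk1 hk2).of_linearEquiv
    (U.toLinearEquiv' hU.invertible) (fun x => pairing_mulVec_mulVec hJ x x)
    (rayleigh_mul_mul_inv_mulVec hU hJ _)
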